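/- arXiv:math/0601612 — 5 statements merged into one kernel-verified Lean document; each statement's English description precedes it below -/
import Mathlib

section
/- Let (q^n_j)_{n∈ℕ} be a sequence of complex numbers of the form q^n_j = Σ_{r=0}^{j} μ^{rn} Q_r(n), where μ = exp(2πiθ) with θ irrational and each Q_r is a polynomial. If sup_n |q^n_j| < ∞, then every Q_r is constant; that is, q^n_j = Σ_{r=0}^j c_r μ^{rn} for constants c_r. -/
/-! The operator `f ↦ (n ↦ f (n + 1) - c * f n)` preserves boundedness and sends
`n ↦ a ^ n * p(n)` to `n ↦ a ^ n * p̃(n)`, where `p̃(X) = a p(X + 1) - c p(X)`. For `a ≠ c` the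
polynomial `p̃` has the degree of `p`; for `a = c` it is `c` times the forward difference of `p`, so
`deg p + 1` applications kill the term. Removing one frequency `z a` this way and inducting on the
set of frequencies shows that all the other polynomials are constant; then `z a ^ n * Q_a(n)` is
bounded, so `Q_a` is constant too. For `z r = μ ^ r` the frequencies are distinct and unimodular
because `θ` is irrational. -/

open Polynomial Finset Filter fwdDiff

section TwistedDifference

variable {R : Type*} [CommRing R]

noncomputable def twistedDiffPoly (a c : R) (p : R[X]) : R[X] := C a * taylor 1 p - C c * p

theorem eval_twistedDiffPoly (a c : R) (p : R[X]) (x : R) :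
    (twistedDiffPoly a c p).eval x = a * p.eval (x + 1) - c * p.eval x := by
  simp [twistedDiffPoly, taylor_eval]

theorem eval_iterate_twistedDiffPoly_self (c : R) (p : R[X]) (k : ℕ) (x : R) :
    ((twistedDiffPoly c c)^[k] p).eval x = c ^ k * (Δ_[1])^[k] p.eval x := by
  induction k generalizing x with
  | zero => simp
  | succ k ih =>
    rw [Function.iterate_succ_apply', eval_twistedDiffPoly, ih, ih, Function.iterate_succ_apply',
      fwdDiff, pow_succ]
    ring

theorem eval_iterate_twistedDiffPoly_self_of_natDegree_lt (c : R) {p : R[X]} {k : ℕ}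
    (hk : p.natDegree < k) (x : R) : ((twistedDiffPoly c c)^[k] p).eval x = 0 := by
  rw [eval_iterate_twistedDiffPoly_self, fwdDiff_iter_eq_zero_of_degree_lt hk, Pi.zero_apply,
    mul_zero]

theorem natDegree_twistedDiffPoly_of_ne [IsDomain R] {a c : R} (h : a ≠ c) (p : R[X]) :
    (twistedDiffPoly a c p).natDegree = p.natDegree := by
  rcases eq_or_ne p 0 with rfl | hp
  · simp [twistedDiffPoly]
  refine natDegree_eq_of_le_of_coeff_ne_zero ?_ ?_
  · refine (natDegree_sub_le _ _).trans (max_le ?_ (natDegree_C_mul_le _ _))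
    exact (natDegree_C_mul_le _ _).trans (natDegree_taylor _ _).le
  · rw [twistedDiffPoly, coeff_sub, coeff_C_mul, coeff_C_mul, coeff_taylor_natDegree,
      coeff_natDegree, ← sub_mul]
    exact mul_ne_zero (sub_ne_zero.mpr h) (leadingCoeff_ne_zero.mpr hp)

theorem natDegree_iterate_twistedDiffPoly_of_ne [IsDomain R] {a c : R} (h : a ≠ c) (p : R[X])
    (k : ℕ) : ((twistedDiffPoly a c)^[k] p).natDegree = p.natDegree := by
  induction k with
  | zero => rfl
  | succ k ih => rw [Function.iterate_succ_apply', natDegree_twistedDiffPoly_of_ne h, ih]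

noncomputable def expPolySeq {ι : Type*} (s : Finset ι) (z : ι → R) (Q : ι → R[X]) (n : ℕ) : R :=
  ∑ i ∈ s, z i ^ n * (Q i).eval (n : R)

def twistedDiff (c : R) (f : ℕ → R) (n : ℕ) : R := f (n + 1) - c * f n

variable {ι : Type*} (s : Finset ι) (z : ι → R) (Q : ι → R[X])

theorem expPolySeq_insert [DecidableEq ι] {a : ι} (ha : a ∉ s) (n : ℕ) :
    expPolySeq (insert a s) z Q n = z a ^ n * (Q a).eval (n : R) + expPolySeq s z Q n :=
  sum_insert ha

theorem twistedDiff_expPolySeq (c : R) :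
    twistedDiff c (expPolySeq s z Q) = expPolySeq s z (fun i => twistedDiffPoly (z i) c (Q i)) := by
  funext n
  simp only [twistedDiff, expPolySeq, mul_sum, ← sum_sub_distrib, eval_twistedDiffPoly,
    Nat.cast_succ, pow_succ]
  exact sum_congr rfl fun i _ => by ring

theorem iterate_twistedDiff_expPolySeq (c : R) (k : ℕ) :
    (twistedDiff c)^[k] (expPolySeq s z Q) =
      expPolySeq s z (fun i => (twistedDiffPoly (z i) c)^[k] (Q i)) := by
  induction k with
  | zero => rfl
  | succ k ih =>
    simp only [Function.iterate_succ_apply', ih, twistedDiff_expPolySeq]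

end TwistedDifference

theorem exists_bound_iterate_twistedDiff {R : Type*} [SeminormedCommRing R] {f : ℕ → R}
    (hf : ∃ M, ∀ n, ‖f n‖ ≤ M) (c : R) (k : ℕ) : ∃ M, ∀ n, ‖(twistedDiff c)^[k] f n‖ ≤ M := by
  induction k with
  | zero => exact hf
  | succ k ih =>
    obtain ⟨M, hM⟩ := ih
    refine ⟨M + ‖c‖ * M, fun n => ?_⟩
    rw [Function.iterate_succ_apply', twistedDiff]
    calc _ ≤ ‖(twistedDiff c)^[k] f (n + 1)‖ + ‖c‖ * ‖(twistedDiff c)^[k] f n‖ :=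
          (norm_sub_le _ _).trans (add_le_add_right (norm_mul_le _ _) _)
      _ ≤ M + ‖c‖ * M := by gcongr <;> apply hM

theorem natDegree_eq_zero_of_bounded_eval_natCast {P : ℂ[X]} {M : ℝ}
    (h : ∀ n : ℕ, ‖P.eval (n : ℂ)‖ ≤ M) : P.natDegree = 0 := by
  by_contra hd
  have hP : Tendsto (fun n : ℕ => ‖P.eval (n : ℂ)‖) atTop atTop :=
    P.tendsto_norm_atTop (natDegree_pos_iff_degree_pos.mp (Nat.pos_of_ne_zero hd))
      (by simpa using tendsto_natCast_atTop_atTop (R := ℝ))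
  obtain ⟨n, hn⟩ := (hP.eventually_gt_atTop M).exists
  exact (h n).not_gt hn

section Unimodular

variable {ι : Type*} {s : Finset ι} {z : ι → ℂ} {Q : ι → ℂ[X]}

theorem exists_bound_expPolySeq_of_natDegree_eq_zero (hz : ∀ i ∈ s, ‖z i‖ = 1)
    (hQ : ∀ i ∈ s, (Q i).natDegree = 0) : ∃ M, ∀ n, ‖expPolySeq s z Q n‖ ≤ M := by
  refine ⟨∑ i ∈ s, ‖(Q i).coeff 0‖,
    fun n => (norm_sum_le _ _).trans_eq (sum_congr rfl fun i hi => ?_)⟩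
  rw [norm_mul, norm_pow, hz i hi, one_pow, one_mul, eq_C_of_natDegree_eq_zero (hQ i hi), eval_C,
    coeff_C_zero]

theorem exists_bound_expPolySeq_iterate_twistedDiffPoly [DecidableEq ι] {a : ι} (ha : a ∉ s)
    (hbdd : ∃ M, ∀ n, ‖expPolySeq (insert a s) z Q n‖ ≤ M) {k : ℕ} (hk : (Q a).natDegree < k) :
    ∃ M, ∀ n, ‖expPolySeq s z (fun i => (twistedDiffPoly (z i) (z a))^[k] (Q i)) n‖ ≤ M := by
  obtain ⟨M, hM⟩ := exists_bound_iterate_twistedDiff hbdd (z a) k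
  refine ⟨M, fun n => ?_⟩
  simpa only [iterate_twistedDiff_expPolySeq, expPolySeq_insert _ _ _ ha,
    eval_iterate_twistedDiffPoly_self_of_natDegree_lt _ hk, mul_zero, zero_add] using hM n

theorem natDegree_eq_zero_of_bounded_expPolySeq_insert [DecidableEq ι] {a : ι} (ha : a ∉ s)
    (hz : ∀ i ∈ insert a s, ‖z i‖ = 1) (hbdd : ∃ M, ∀ n, ‖expPolySeq (insert a s) z Q n‖ ≤ M)
    (hQ : ∀ i ∈ s, (Q i).natDegree = 0) : (Q a).natDegree = 0 := by
  obtain ⟨M, hM⟩ := hbdd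
  obtain ⟨M', hM'⟩ := exists_bound_expPolySeq_of_natDegree_eq_zero
    (fun i hi => hz i (mem_insert_of_mem hi)) hQ
  refine natDegree_eq_zero_of_bounded_eval_natCast (M := M + M') fun n => ?_
  calc ‖(Q a).eval (n : ℂ)‖ = ‖z a ^ n * (Q a).eval (n : ℂ)‖ := by
        rw [norm_mul, norm_pow, hz a (mem_insert_self a s), one_pow, one_mul]
    _ = ‖expPolySeq (insert a s) z Q n - expPolySeq s z Q n‖ := by
        rw [expPolySeq_insert _ _ _ ha, add_sub_cancel_right]
    _ ≤ M + M' := (norm_sub_le _ _).trans (add_le_add (hM n) (hM' n))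

theorem natDegree_eq_zero_of_bounded_expPolySeq (hz : ∀ i ∈ s, ‖z i‖ = 1)
    (hinj : Set.InjOn z s) (hbdd : ∃ M, ∀ n, ‖expPolySeq s z Q n‖ ≤ M) :
    ∀ i ∈ s, (Q i).natDegree = 0 := by
  classical
  induction s using Finset.induction_on generalizing Q with
  | empty => simp
  | insert a s ha ih =>
    rw [coe_insert, Set.injOn_insert (mod_cast ha)] at hinj
    obtain ⟨k, hk⟩ : ∃ k, (Q a).natDegree < k := ⟨_, Nat.lt_succ_self _⟩
    have hs : ∀ i ∈ s, (Q i).natDegree = 0 := fun i hi => by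
      rw [← natDegree_iterate_twistedDiffPoly_of_ne (fun h => hinj.2 ⟨i, hi, h⟩) _ k]
      exact ih (fun i hi => hz i (mem_insert_of_mem hi)) hinj.1
        (exists_bound_expPolySeq_iterate_twistedDiffPoly ha hbdd hk) i hi
    have ha' := natDegree_eq_zero_of_bounded_expPolySeq_insert ha hz hbdd hs
    exact fun i hi => (mem_insert.mp hi).elim (fun h => h ▸ ha') (hs i)

end Unimodular

theorem Irrational.injective_pow_exp_two_pi_I_mul {θ : ℝ} (hθ : Irrational θ) :
    Function.Injective fun n : ℕ => Complex.exp (2 * Real.pi * Complex.I * θ) ^ n := by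
  intro m n hmn
  simp only [← Complex.exp_nat_mul] at hmn
  obtain ⟨k, hk⟩ := Complex.exp_eq_exp_iff_exists_int.mp hmn
  by_contra hne
  have hθk : ((m - n : ℤ) : ℝ) * θ = k := by
    apply Complex.ofReal_injective
    apply mul_right_cancel₀ Complex.two_pi_I_ne_zero
    push_cast
    linear_combination hk
  exact (hθ.intCast_mul (sub_ne_zero.2 (Nat.cast_injective.ne hne))).ne_int k hθk

/-- Let `q^n = ∑_{r=0}^{j} μ^{r n} Q_r(n)` where `μ = exp(2πiθ)` with `θ`
irrational and each `Q_r` a polynomial.  If `sup_n |q^n| < ∞`, then every `Q_r` (for `r ≤ j`) is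
constant; that is, `q^n = ∑_{r=0}^{j} c_r μ^{r n}` for constants `c_r`. -/
theorem bounded_exponential_polynomial_irrational
    (θ : ℝ) (hθ : Irrational θ) (j : ℕ) (Q : ℕ → Polynomial ℂ) (q : ℕ → ℂ)
    (hq : ∀ n : ℕ, q n = ∑ r ∈ Finset.range (j + 1),
        (Complex.exp (2 * Real.pi * Complex.I * θ)) ^ (r * n) * (Q r).eval (n : ℂ))
    (hbdd : ∃ M : ℝ, ∀ n, ‖q n‖ ≤ M) :
    ∃ c : ℕ → ℂ, (∀ r, r ≤ j → Q r = Polynomial.C (c r)) ∧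
      ∀ n : ℕ, q n = ∑ r ∈ Finset.range (j + 1),
        c r * (Complex.exp (2 * Real.pi * Complex.I * θ)) ^ (r * n) := by
  set μ := Complex.exp (2 * Real.pi * Complex.I * θ)
  have hq' : q = expPolySeq (range (j + 1)) (μ ^ ·) Q := funext fun n => by
    simp only [hq, expPolySeq, pow_mul]
  have hμ : ∀ r ∈ range (j + 1), ‖μ ^ r‖ = 1 := fun r _ => by
    rw [norm_pow, Complex.norm_exp]
    simp
  have hconst : ∀ r ∈ range (j + 1), Q r = C ((Q r).coeff 0) := fun r hr =>
    eq_C_of_natDegree_eq_zero <| natDegree_eq_zero_of_bounded_expPolySeq hμ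
      hθ.injective_pow_exp_two_pi_I_mul.injOn (hq' ▸ hbdd) r hr
  refine ⟨fun r => (Q r).coeff 0, fun r hr => hconst r (mem_range_succ_iff.mpr hr), fun n => ?_⟩
  rw [hq]
  refine sum_congr rfl fun r hr => ?_
  rw [hconst r hr, eval_C]
  exact mul_comm _ _
end

section
/- Let (q^n)_{n∈ℕ} be given by q^n = Σ_{r=0}^{j} μ^{rn} Q_r(n) where |μ| > 1 and the Q_r are polynomials. If sup_n |q^n| < ∞, then q^n is constant in n (all Q_r with r ≥ 1 vanish and Q_0 is constant). -/
open Polynomial Filter Finset Topology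

private lemma bepe_shift_eval (P : ℂ[X]) (x : ℂ) :
    (P.comp (X + 1)).eval x = P.eval (x + 1) := by
  simp [eval_comp]

private lemma bepe_natDegree_shift_sub_lt (P : ℂ[X]) (hd : 0 < P.natDegree) :
    (P.comp (X + 1) - P).natDegree < P.natDegree := by
  have hP : P ≠ 0 := fun h => by simp [h] at hd
  have hX : (X + 1 : ℂ[X]) = X + C 1 := by simp
  have hXd : (X + 1 : ℂ[X]).natDegree = 1 := by rw [hX]; exact natDegree_X_add_C 1
  have hcompd : (P.comp (X + 1)).natDegree = P.natDegree := by
    rw [natDegree_comp, hXd, mul_one]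
  have hlc : (P.comp (X + 1)).leadingCoeff = P.leadingCoeff := by
    rw [leadingCoeff_comp (by rw [hXd]; norm_num), hX, leadingCoeff_X_add_C, one_pow, mul_one]
  have hcomp0 : P.comp (X + 1) ≠ 0 := by
    intro h
    have := hlc
    rw [h, leadingCoeff_zero] at this
    exact hP (leadingCoeff_eq_zero.mp this.symm)
  have hdeg : (P.comp (X + 1)).degree = P.degree := by
    rw [degree_eq_natDegree hcomp0, degree_eq_natDegree hP, hcompd]
  by_cases h0 : P.comp (X + 1) - P = 0
  · rw [h0]; simpa using hd
  · have := degree_sub_lt hdeg hcomp0 hlc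
    rw [hdeg] at this
    exact natDegree_lt_natDegree h0 this

/-- A complex polynomial whose values at the natural numbers tend to zero is zero. -/
private lemma bepe_eq_zero_of_tendsto :
    ∀ (d : ℕ) (P : ℂ[X]), P.natDegree ≤ d →
      Tendsto (fun n : ℕ => P.eval (n : ℂ)) atTop (𝓝 0) → P = 0 := by
  intro d
  induction d with
  | zero =>
    intro P hd h
    obtain ⟨c, hc⟩ : ∃ c, P = C c := ⟨P.coeff 0, eq_C_of_natDegree_le_zero hd⟩
    rw [hc] at h ⊢
    simp only [eval_C] at h
    have : c = 0 := tendsto_nhds_unique tendsto_const_nhds h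
    rw [this, map_zero]
  | succ d ih =>
    intro P hd h
    by_cases hdeg : P.natDegree ≤ d
    · exact ih P hdeg h
    · have hpos : 0 < P.natDegree := by omega
      set D := P.comp (X + 1) - P with hD
      have hDd : D.natDegree ≤ d := by
        have hlt := bepe_natDegree_shift_sub_lt P hpos
        rw [← hD] at hlt
        omega
      have hDev : ∀ n : ℕ, D.eval (n : ℂ) = P.eval ((n : ℂ) + 1) - P.eval (n : ℂ) := by
        intro n
        simp [hD, bepe_shift_eval]
      have hDt : Tendsto (fun n : ℕ => D.eval (n : ℂ)) atTop (𝓝 0) := by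
        have h1 : Tendsto (fun n : ℕ => P.eval ((n : ℂ) + 1)) atTop (𝓝 0) := by
          have := h.comp (tendsto_add_atTop_nat 1)
          simpa [Function.comp_def] using this
        have := h1.sub h
        simp only [sub_zero] at this
        simpa [hDev] using this
      have hD0 : D = 0 := ih D hDd hDt
      have hstep : ∀ n : ℕ, P.eval ((n : ℂ) + 1) = P.eval (n : ℂ) := by
        intro n
        have h2 := hDev n
        rw [hD0, eval_zero] at h2
        exact sub_eq_zero.mp h2.symm
      have hconst : ∀ n : ℕ, P.eval (n : ℂ) = P.eval ((0 : ℕ) : ℂ) := by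
        intro n
        induction n with
        | zero => rfl
        | succ k ihk =>
          push_cast
          rw [hstep k]
          push_cast at ihk
          exact ihk
      have h0 : P.eval ((0 : ℕ) : ℂ) = 0 := by
        have h' : Tendsto (fun _ : ℕ => P.eval ((0 : ℕ) : ℂ)) atTop (𝓝 0) := by
          have : (fun n : ℕ => P.eval (n : ℂ)) = fun _ : ℕ => P.eval ((0 : ℕ) : ℂ) :=
            funext hconst
          rwa [this] at h
        exact tendsto_nhds_unique tendsto_const_nhds h'
      apply eq_zero_of_infinite_isRoot
      refine Set.infinite_of_injective_forall_mem (f := fun n : ℕ => (n : ℂ))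
        Nat.cast_injective (fun n => ?_)
      show P.IsRoot (n : ℂ)
      rw [IsRoot, hconst n, h0]

/-- A complex polynomial bounded on the natural numbers is constant. -/
private lemma bepe_bounded_const :
    ∀ (d : ℕ) (P : ℂ[X]), P.natDegree ≤ d → (∀ M : ℝ, (∀ n : ℕ, ‖P.eval (n : ℂ)‖ ≤ M) →
      ∃ c : ℂ, P = C c) := by
  intro d
  induction d with
  | zero =>
    intro P hd M hM
    exact ⟨P.coeff 0, eq_C_of_natDegree_le_zero hd⟩
  | succ d ih =>
    intro P hd M hM
    by_cases hdeg : P.natDegree ≤ d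
    · exact ih P hdeg M hM
    · have hpos : 0 < P.natDegree := by omega
      set D := P.comp (X + 1) - P with hD
      have hDd : D.natDegree ≤ d := by
        have hlt := bepe_natDegree_shift_sub_lt P hpos
        rw [← hD] at hlt
        omega
      have hDev : ∀ n : ℕ, D.eval (n : ℂ) = P.eval ((n : ℂ) + 1) - P.eval (n : ℂ) := by
        intro n
        simp [hD, bepe_shift_eval]
      have hDb : ∀ n : ℕ, ‖D.eval (n : ℂ)‖ ≤ M + M := by
        intro n
        rw [hDev n]
        have e : ((n : ℂ) + 1) = ((n + 1 : ℕ) : ℂ) := by push_cast; ring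
        rw [e]
        exact (norm_sub_le _ _).trans (add_le_add (hM (n + 1)) (hM n))
      obtain ⟨c, hc⟩ := ih D hDd (M + M) hDb
      have hstep : ∀ n : ℕ, P.eval ((n : ℂ) + 1) = P.eval (n : ℂ) + c := by
        intro n
        have h2 := hDev n
        rw [hc, eval_C] at h2
        linear_combination -h2
      have haff : ∀ n : ℕ, P.eval (n : ℂ) = P.eval ((0 : ℕ) : ℂ) + n * c := by
        intro n
        induction n with
        | zero => simp
        | succ k ihk =>
          push_cast
          rw [hstep k, ihk]
          push_cast
          ring
      have hc0 : c = 0 := by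
        by_contra hcne
        obtain ⟨n, hn⟩ := exists_nat_gt ((M + ‖P.eval ((0 : ℕ) : ℂ)‖) / ‖c‖)
        have hcpos : (0 : ℝ) < ‖c‖ := norm_pos_iff.mpr hcne
        have h1 : M + ‖P.eval ((0 : ℕ) : ℂ)‖ < n * ‖c‖ := by
          rw [div_lt_iff₀ hcpos] at hn
          linarith
        have h2 : ‖(n : ℂ) * c‖ ≤ M + ‖P.eval ((0 : ℕ) : ℂ)‖ := by
          have he : (n : ℂ) * c = P.eval (n : ℂ) - P.eval ((0 : ℕ) : ℂ) := by
            rw [haff n]; ring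
          rw [he]
          exact (norm_sub_le _ _).trans (add_le_add (hM n) le_rfl)
        have h3 : ‖(n : ℂ) * c‖ = n * ‖c‖ := by
          rw [norm_mul, Complex.norm_natCast]
        linarith
      -- eval constant; conclude P = C (eval 0)
      refine ⟨P.eval ((0 : ℕ) : ℂ), ?_⟩
      have : P - C (P.eval ((0 : ℕ) : ℂ)) = 0 := by
        apply eq_zero_of_infinite_isRoot
        refine Set.infinite_of_injective_forall_mem (f := fun n : ℕ => (n : ℂ))
          Nat.cast_injective (fun n => ?_)
        show (P - C (P.eval ((0 : ℕ) : ℂ))).IsRoot (n : ℂ)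
        simp [IsRoot, haff n, hc0]
      linear_combination this

private lemma bepe_tendsto_poly_mul_geom (P : ℂ[X]) {a : ℂ} (ha : ‖a‖ < 1) :
    Tendsto (fun n : ℕ => a ^ n * P.eval (n : ℂ)) atTop (𝓝 0) := by
  have key : ∀ k : ℕ, Tendsto (fun n : ℕ => (n : ℂ) ^ k * a ^ n) atTop (𝓝 0) := by
    intro k
    have hs : Summable fun n : ℕ => ‖(n : ℂ) ^ k * a ^ n‖ :=
      summable_norm_pow_mul_geometric_of_norm_lt_one k ha
    exact hs.of_norm.tendsto_atTop_zero
  have heq : (fun n : ℕ => a ^ n * P.eval (n : ℂ)) =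
      fun n : ℕ => ∑ i ∈ range (P.natDegree + 1), P.coeff i * ((n : ℂ) ^ i * a ^ n) := by
    funext n
    rw [eval_eq_sum_range, Finset.mul_sum]
    apply Finset.sum_congr rfl
    intro i _
    ring
  rw [heq]
  have := tendsto_finset_sum (range (P.natDegree + 1))
    (fun i _ => ((key i).const_mul (P.coeff i)))
  simpa using this

/-- the top-degree coefficient polynomial vanishes -/
private lemma bepe_top_zero (μ : ℂ) (hμ : 1 < ‖μ‖) (j : ℕ) (Q : ℕ → Polynomial ℂ) (q : ℕ → ℂ)
    (hq : ∀ n : ℕ, q n = ∑ r ∈ range (j + 1 + 1), μ ^ (r * n) * (Q r).eval (n : ℂ))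
    (M : ℝ) (hM : ∀ n, ‖q n‖ ≤ M) : Q (j + 1) = 0 := by
  have hμ0 : μ ≠ 0 := by
    intro h
    rw [h, norm_zero] at hμ
    linarith
  have hμpos : (0 : ℝ) < ‖μ‖ := by linarith
  set f : ℕ → ℂ := fun n => q n / μ ^ ((j + 1) * n) with hf
  -- f tends to 0
  have hft : Tendsto f atTop (𝓝 0) := by
    rw [tendsto_zero_iff_norm_tendsto_zero]
    set R : ℝ := (‖μ‖ ^ (j + 1))⁻¹ with hR
    have hRpos : 0 < R := by positivity
    have hR1 : R < 1 := by
      rw [hR, inv_lt_one_iff₀]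
      right
      exact one_lt_pow₀ hμ (by omega)
    have hgeo : Tendsto (fun n : ℕ => M * R ^ n) atTop (𝓝 0) := by
      have := tendsto_pow_atTop_nhds_zero_of_lt_one hRpos.le hR1
      simpa using this.const_mul M
    apply squeeze_zero (fun n => norm_nonneg _) _ hgeo
    intro n
    have hnorm : ‖f n‖ = ‖q n‖ * R ^ n := by
      rw [hf]
      simp only [norm_div, norm_pow]
      rw [hR, div_eq_mul_inv, ← inv_pow, pow_mul, inv_pow]
    rw [hnorm]
    have hRn : (0:ℝ) ≤ R ^ n := by positivity
    exact mul_le_mul_of_nonneg_right (hM n) hRn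
  -- rewrite f as a sum
  have hfeq : ∀ n : ℕ, f n = ∑ r ∈ range (j + 1 + 1),
      (μ ^ r / μ ^ (j + 1)) ^ n * (Q r).eval (n : ℂ) := by
    intro n
    rw [hf]
    simp only [hq n, Finset.sum_div]
    apply Finset.sum_congr rfl
    intro r _
    rw [div_pow, ← pow_mul, ← pow_mul]
    ring
  -- the polynomial evaluations tend to 0
  have heval : ∀ n : ℕ, (Q (j + 1)).eval (n : ℂ) =
      f n - ∑ r ∈ range (j + 1), (μ ^ r / μ ^ (j + 1)) ^ n * (Q r).eval (n : ℂ) := by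
    intro n
    rw [hfeq n, Finset.sum_range_succ, div_self (pow_ne_zero _ hμ0), one_pow, one_mul]
    ring
  have hterms : Tendsto (fun n : ℕ => ∑ r ∈ range (j + 1),
      (μ ^ r / μ ^ (j + 1)) ^ n * (Q r).eval (n : ℂ)) atTop (𝓝 0) := by
    have := tendsto_finset_sum (range (j + 1)) (fun r hr => by
      have hrlt : r < j + 1 := Finset.mem_range.mp hr
      have hsmall : ‖μ ^ r / μ ^ (j + 1)‖ < 1 := by
        rw [norm_div, norm_pow, norm_pow, div_lt_one (by positivity)]
        exact pow_lt_pow_right₀ hμ hrlt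
      exact bepe_tendsto_poly_mul_geom (Q r) hsmall)
    simpa using this
  have : Tendsto (fun n : ℕ => (Q (j + 1)).eval (n : ℂ)) atTop (𝓝 0) := by
    have := hft.sub hterms
    simp only [sub_zero] at this
    simp only [heval]
    exact this
  exact bepe_eq_zero_of_tendsto (Q (j+1)).natDegree (Q (j+1)) le_rfl this

private lemma bepe_key (μ : ℂ) (hμ : 1 < ‖μ‖) :
    ∀ (j : ℕ) (Q : ℕ → Polynomial ℂ) (q : ℕ → ℂ),
      (∀ n : ℕ, q n = ∑ r ∈ range (j + 1), μ ^ (r * n) * (Q r).eval (n : ℂ)) →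
      (∃ M : ℝ, ∀ n, ‖q n‖ ≤ M) →
      (∀ r, 1 ≤ r → r ≤ j → Q r = 0) ∧ ∃ c : ℂ, Q 0 = C c := by
  intro j
  induction j with
  | zero =>
    rintro Q q hq ⟨M, hM⟩
    refine ⟨fun r h1 h2 => by omega, ?_⟩
    have hq0 : ∀ n : ℕ, q n = (Q 0).eval (n : ℂ) := by
      intro n
      rw [hq n]
      simp
    exact bepe_bounded_const (Q 0).natDegree (Q 0) le_rfl M (fun n => by rw [← hq0 n]; exact hM n)
  | succ j ih =>
    rintro Q q hq ⟨M, hM⟩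
    have htop : Q (j + 1) = 0 := bepe_top_zero μ hμ j Q q hq M hM
    have hq' : ∀ n : ℕ, q n = ∑ r ∈ range (j + 1), μ ^ (r * n) * (Q r).eval (n : ℂ) := by
      intro n
      rw [hq n, Finset.sum_range_succ, htop]
      simp
    obtain ⟨h1, h2⟩ := ih Q q hq' ⟨M, hM⟩
    refine ⟨fun r hr1 hr2 => ?_, h2⟩
    rcases Nat.lt_or_ge r (j + 1) with h | h
    · exact h1 r hr1 (by omega)
    · have : r = j + 1 := by omega
      rw [this]; exact htop

/-- Let `q^n = ∑_{r=0}^{j} μ^{r n} Q_r(n)` where `|μ| > 1` and the `Q_r` are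
polynomials.  If `sup_n |q^n| < ∞`, then `q^n` is constant in `n`: all `Q_r` with `r ≥ 1` vanish
and `Q_0` is constant. -/
theorem bounded_exponential_polynomial_expanding
    (μ : ℂ) (hμ : 1 < ‖μ‖) (j : ℕ) (Q : ℕ → Polynomial ℂ) (q : ℕ → ℂ)
    (hq : ∀ n : ℕ, q n = ∑ r ∈ Finset.range (j + 1), μ ^ (r * n) * (Q r).eval (n : ℂ))
    (hbdd : ∃ M : ℝ, ∀ n, ‖q n‖ ≤ M) :
    (∀ r, 1 ≤ r → r ≤ j → Q r = 0) ∧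
    (∃ c : ℂ, Q 0 = Polynomial.C c) ∧
    (∃ c : ℂ, ∀ n : ℕ, q n = c) := by
  obtain ⟨h1, c, hc⟩ := bepe_key μ hμ j Q q hq hbdd
  refine ⟨h1, ⟨c, hc⟩, ⟨c, fun n => ?_⟩⟩
  rw [hq n, Finset.sum_eq_single 0]
  · simp [hc]
  · intro r hr hr0
    rw [h1 r (Nat.one_le_iff_ne_zero.mpr hr0) (Nat.lt_succ_iff.mp (Finset.mem_range.mp hr))]
    simp
  · intro h
    exact absurd (Finset.mem_range.mpr (by omega)) h
end

section
/- With P_{c,a} as above, two parameters (c,a) and (c',a') in ℂ^{d−2} × ℂ give affinely conjugate marked polynomials (via an affine map φ with φ∘P_{c,a}∘φ^{−1} = P_{c',a'}, φ(0)=0, φ(c_i)=c'_i) if and only if there exists a (d−1)-th root of unity ζ with c'_i = ζ c_i for all i and (a')^d = ζ a^d. Consequently the parameterization map π: ℂ^{d−1} → P_d is a finite ramified cover of degree d(d−1). -/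
open Polynomial

/-- The standard parameterization `P_{c,a}` of degree-`d` polynomials with marked critical points
`0, c_1, …, c_{d−2}` and constant term `a^d`. -/
noncomputable def Pca (d : ℕ) (c : Fin (d - 2) → ℂ) (a : ℂ) : Polynomial ℂ :=
  C ((d : ℂ)⁻¹) * X ^ d
    + ∑ j ∈ Finset.Icc 2 (d - 1),
        C ((-1) ^ (d - j) * (Finset.univ.val.map c).esymm (d - j) / (j : ℂ)) * X ^ j
    + C (a ^ d)

lemma coeff_comp_C_mul_X (p : ℂ[X]) (u : ℂ) (n : ℕ) :
    (p.comp (C u * X)).coeff n = u ^ n * p.coeff n := by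
  induction p using Polynomial.induction_on' with
  | add p q hp hq => simp [add_comp, hp, hq, mul_add]
  | monomial k b =>
      rw [monomial_comp]
      simp only [mul_pow, ← C_pow, ← mul_assoc, ← C_mul, coeff_C_mul, coeff_X_pow,
        coeff_monomial]
      by_cases h : k = n
      · subst h; simp [mul_comm]
      · simp only [if_neg h, if_neg (Ne.symm h), mul_zero]

lemma Pca_coeff_d (d : ℕ) (hd : 2 ≤ d) (c : Fin (d-2) → ℂ) (a : ℂ) :
    (Pca d c a).coeff d = (d : ℂ)⁻¹ := by
  have hd0 : d ≠ 0 := by omega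
  simp only [Pca, coeff_add, coeff_C, coeff_C_mul, coeff_X_pow, finset_sum_coeff]
  rw [Finset.sum_eq_zero, if_neg hd0]
  · norm_num
  · intro j hj
    simp only [Finset.mem_Icc] at hj
    rw [if_neg (by omega : ¬ d = j), mul_zero]

lemma Pca_eval_zero (d : ℕ) (hd : 2 ≤ d) (c : Fin (d-2) → ℂ) (a : ℂ) :
    (Pca d c a).eval 0 = a ^ d := by
  have hd0 : d ≠ 0 := by omega
  simp only [Pca, eval_add, eval_mul, eval_C, eval_pow, eval_X, eval_finset_sum]
  rw [Finset.sum_eq_zero, zero_pow hd0]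
  · ring
  · intro j hj
    simp only [Finset.mem_Icc] at hj
    rw [zero_pow (by omega : j ≠ 0), mul_zero]

lemma esymm_map_mul (n : ℕ) (ζ : ℂ) (c : Fin n → ℂ) (k : ℕ) :
    ((Finset.univ.val.map fun i => ζ * c i).esymm k)
      = ζ ^ k * (Finset.univ.val.map c).esymm k := by
  have := Multiset.pow_smul_esymm (S := ℂ) ζ k (Finset.univ.val.map c)
  rw [smul_eq_mul] at this
  rw [show (fun i => ζ * c i) = (fun x => ζ • x) ∘ c from rfl,
    ← Multiset.map_map, ← this]

/-- Two parameters `(c,a)` and `(c',a')` give affinely conjugate marked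
polynomials — via an affine map `φ(z) = u z + v` with `φ(0) = 0`, `φ ∘ P_{c,a} = P_{c',a'} ∘ φ`
and `φ(c_i) = c'_i` — if and only if there is a `(d−1)`-th root of unity `ζ` with `c'_i = ζ c_i`
for all `i` and `(a')^d = ζ a^d`.  Consequently each fiber of the parameterization
`π : ℂ^{d−1} → 𝒫_d` is finite, of cardinality at most `d (d−1)` (the degree of the cover). -/
theorem Pca_conjugacy_classification (d : ℕ) (hd : 2 ≤ d)
    (c c' : Fin (d - 2) → ℂ) (a a' : ℂ) :
    ((∃ u v : ℂ, u ≠ 0 ∧ u * 0 + v = 0 ∧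
        (∀ z : ℂ, u * (Pca d c a).eval z + v = (Pca d c' a').eval (u * z + v)) ∧
        (∀ i, u * c i + v = c' i)) ↔
      (∃ ζ : ℂ, ζ ^ (d - 1) = 1 ∧ (∀ i, c' i = ζ * c i) ∧ a' ^ d = ζ * a ^ d)) ∧
    Set.Finite {p : (Fin (d - 2) → ℂ) × ℂ | ∃ ζ : ℂ, ζ ^ (d - 1) = 1 ∧
        (∀ i, p.1 i = ζ * c i) ∧ p.2 ^ d = ζ * a ^ d} ∧
    Set.ncard {p : (Fin (d - 2) → ℂ) × ℂ | ∃ ζ : ℂ, ζ ^ (d - 1) = 1 ∧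
        (∀ i, p.1 i = ζ * c i) ∧ p.2 ^ d = ζ * a ^ d} ≤ d * (d - 1) := by
  classical
  have hd0 : d ≠ 0 := by omega
  have hdc : (d : ℂ) ≠ 0 := Nat.cast_ne_zero.mpr hd0
  constructor
  · constructor
    · rintro ⟨u, v, hu, hv0, heq, hc⟩
      have hv : v = 0 := by simpa using hv0
      subst hv
      -- polynomial identity
      have hpoly : C u * Pca d c a = (Pca d c' a').comp (C u * X) := by
        apply Polynomial.funext
        intro z
        have := heq z
        simp only [add_zero] at this
        simp [eval_comp, this]
      have hcoeff := congrArg (fun p => p.coeff d) hpoly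
      simp only [coeff_C_mul, coeff_comp_C_mul_X, Pca_coeff_d d hd] at hcoeff
      have hud : u ^ d = u := by
        field_simp at hcoeff
        exact hcoeff.symm
      have hζ : u ^ (d - 1) = 1 := by
        have h1 : u ^ (d - 1) * u = 1 * u := by
          rw [← pow_succ, show d - 1 + 1 = d by omega, hud, one_mul]
        exact mul_right_cancel₀ hu h1
      refine ⟨u, hζ, fun i => by rw [← hc i, add_zero], ?_⟩
      have h0 := heq 0
      simp only [mul_zero, add_zero, Pca_eval_zero d hd] at h0
      exact h0.symm
    · rintro ⟨ζ, hζ, hcc, ha⟩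
      have hζ0 : ζ ≠ 0 := by
        intro h
        rw [h, zero_pow (by omega : d - 1 ≠ 0)] at hζ
        exact zero_ne_one hζ
      have hζd : ζ ^ d = ζ := by
        conv_lhs => rw [show d = (d - 1) + 1 by omega]
        rw [pow_succ, hζ, one_mul]
      have hc'' : c' = fun i => ζ * c i := funext hcc
      refine ⟨ζ, 0, hζ0, by ring, ?_, fun i => by rw [hcc i, add_zero]⟩
      intro z
      simp only [mul_zero, add_zero, Pca, eval_add, eval_mul, eval_C, eval_pow, eval_X,
        eval_finset_sum, hc'', ha]
      rw [mul_add, mul_add, Finset.mul_sum]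
      congr 1
      congr 1
      · rw [mul_pow, hζd]; ring
      · apply Finset.sum_congr rfl
        intro j hj
        simp only [Finset.mem_Icc] at hj
        have hz : ζ ^ (d - j) * ζ ^ j = ζ := by
          rw [← pow_add, show d - j + j = d by omega, hζd]
        rw [esymm_map_mul, mul_pow]
        set e := (Finset.univ.val.map c).esymm (d - j) with he
        have hj0 : (j : ℂ) ≠ 0 := Nat.cast_ne_zero.mpr (by omega)
        linear_combination (-((-1 : ℂ)) ^ (d - j) * e / (j : ℂ) * z ^ j) * hz
  · -- finiteness and cardinality
    set Z : Finset ℂ := (Polynomial.nthRoots (d - 1) (1 : ℂ)).toFinset with hZ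
    set F : Finset ((Fin (d - 2) → ℂ) × ℂ) :=
      Z.biUnion (fun ζ => ((Polynomial.nthRoots d (ζ * a ^ d)).toFinset).image
        (fun b => (fun i => ζ * c i, b))) with hF
    have hsub : {p : (Fin (d - 2) → ℂ) × ℂ | ∃ ζ : ℂ, ζ ^ (d - 1) = 1 ∧
        (∀ i, p.1 i = ζ * c i) ∧ p.2 ^ d = ζ * a ^ d} ⊆ ↑F := by
      rintro ⟨cc, b⟩ ⟨ζ, hζ, hcc, hb⟩
      refine Finset.mem_coe.mpr (Finset.mem_biUnion.mpr ⟨ζ, ?_, ?_⟩)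
      · rw [hZ, Multiset.mem_toFinset, Polynomial.mem_nthRoots (by omega : 0 < d - 1)]
        exact hζ
      · refine Finset.mem_image.mpr ⟨b, ?_, ?_⟩
        · rw [Multiset.mem_toFinset, Polynomial.mem_nthRoots (by omega : 0 < d)]
          exact hb
        · exact Prod.ext (funext fun i => (hcc i).symm) rfl
    refine ⟨Set.Finite.subset F.finite_toSet hsub, ?_⟩
    calc Set.ncard {p : (Fin (d - 2) → ℂ) × ℂ | ∃ ζ : ℂ, ζ ^ (d - 1) = 1 ∧
            (∀ i, p.1 i = ζ * c i) ∧ p.2 ^ d = ζ * a ^ d}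
        ≤ F.card := by
          rw [← Set.ncard_coe_finset]
          exact Set.ncard_le_ncard hsub F.finite_toSet
      _ ≤ ∑ ζ ∈ Z, ((Polynomial.nthRoots d (ζ * a ^ d)).toFinset.image
            (fun b => ((fun i => ζ * c i, b) : (Fin (d - 2) → ℂ) × ℂ))).card :=
          Finset.card_biUnion_le
      _ ≤ ∑ _ζ ∈ Z, d := by
          apply Finset.sum_le_sum
          intro ζ _
          calc ((Polynomial.nthRoots d (ζ * a ^ d)).toFinset.image
                  (fun b => ((fun i => ζ * c i, b) : (Fin (d - 2) → ℂ) × ℂ))).card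
              ≤ (Polynomial.nthRoots d (ζ * a ^ d)).toFinset.card := Finset.card_image_le
            _ ≤ Multiset.card (Polynomial.nthRoots d (ζ * a ^ d)) :=
                Multiset.toFinset_card_le _
            _ ≤ d := Polynomial.card_nthRoots d _
      _ = Z.card * d := by rw [Finset.sum_const, smul_eq_mul]
      _ ≤ (d - 1) * d := by
          apply Nat.mul_le_mul_right
          calc Z.card ≤ Multiset.card (Polynomial.nthRoots (d - 1) (1 : ℂ)) :=
                Multiset.toFinset_card_le _
            _ ≤ d - 1 := Polynomial.card_nthRoots _ _
      _ = d * (d - 1) := Nat.mul_comm _ _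
end

section
/- Let S be the set of unordered pairs {α, α'} of distinct points of ℝ/ℤ with dα = dα' (mod 1), where d ≥ 2 is an integer. Then S, with the Hausdorff metric induced by the standard metric on ℝ/ℤ, is a compact space with exactly ⌊d/2⌋ connected components, each homeomorphic to ℝ/ℤ. -/
open TopologicalSpace

instance : Fact ((0 : ℝ) < 1) := ⟨one_pos⟩

/-- The circle `ℝ/ℤ`. -/
abbrev Circle1 := AddCircle (1 : ℝ)

/-- `S` is the set of unordered pairs `{α, α'}` of distinct points of `ℝ/ℤ` with `dα = dα'`,
viewed inside the hyperspace of nonempty compact subsets of `ℝ/ℤ` with the Hausdorff metric. -/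
def Sset (d : ℕ) : Set (NonemptyCompacts Circle1) :=
  {K | ∃ α α' : Circle1, α ≠ α' ∧ d • α = d • α' ∧ (K : Set Circle1) = {α, α'}}

namespace SsetAux

noncomputable def pairNC (a b : Circle1) : NonemptyCompacts Circle1 :=
  ⟨⟨{a, b}, isCompact_singleton.insert a⟩, ⟨a, Or.inl rfl⟩⟩

@[simp] lemma pairNC_coe (a b : Circle1) : (pairNC a b : Set Circle1) = {a, b} := rfl

lemma pairNC_comm (a b : Circle1) : pairNC a b = pairNC b a :=
  NonemptyCompacts.ext (by simp [Set.pair_comm])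

lemma dist_pairNC_le (a b a' b' : Circle1) :
    dist (pairNC a b) (pairNC a' b') ≤ max (dist a a') (dist b b') := by
  rw [Metric.NonemptyCompacts.dist_eq]
  apply Metric.hausdorffDist_le_of_mem_dist (le_max_iff.2 (Or.inl dist_nonneg))
  · intro x hx
    simp only [pairNC_coe, Set.mem_insert_iff, Set.mem_singleton_iff] at hx
    rcases hx with rfl | rfl
    · exact ⟨a', Or.inl rfl, le_max_left _ _⟩
    · exact ⟨b', Or.inr rfl, le_max_right _ _⟩
  · intro x hx
    simp only [pairNC_coe, Set.mem_insert_iff, Set.mem_singleton_iff] at hx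
    rcases hx with rfl | rfl
    · exact ⟨a, Or.inl rfl, by rw [dist_comm]; exact le_max_left _ _⟩
    · exact ⟨b, Or.inr rfl, by rw [dist_comm]; exact le_max_right _ _⟩

lemma continuous_pairNC : Continuous fun p : Circle1 × Circle1 => pairNC p.1 p.2 := by
  refine LipschitzWith.continuous (K := 1) ?_
  refine LipschitzWith.of_dist_le_mul fun p q => ?_
  rw [NNReal.coe_one, one_mul, Prod.dist_eq]
  exact dist_pairNC_le _ _ _ _

lemma coe_eq_coe {a b : ℝ} : (↑a : Circle1) = ↑b ↔ ∃ n : ℤ, a - b = n := by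
  constructor
  · intro h
    have h0 : ((a - b : ℝ) : Circle1) = 0 := by
      rw [AddCircle.coe_sub, h, sub_self]
    obtain ⟨n, hn⟩ := (AddCircle.coe_eq_zero_iff _).1 h0
    exact ⟨n, by simpa using hn.symm⟩
  · rintro ⟨n, hn⟩
    have : ((a - b : ℝ) : Circle1) = 0 := by
      rw [AddCircle.coe_eq_zero_iff]
      exact ⟨n, by simp [hn]⟩
    rwa [AddCircle.coe_sub, sub_eq_zero] at this


noncomputable def cval (d k : ℕ) : ℝ := if 2 * k = d ∧ 1 ≤ k then 2⁻¹ else 1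

noncomputable def gfun (d k : ℕ) (t : ℝ) : NonemptyCompacts Circle1 :=
  pairNC ↑(cval d k * t) ↑(cval d k * t + (k : ℝ) / d)

lemma gper (d k : ℕ) : Function.Periodic (gfun d k) 1 := by
  intro t
  unfold gfun cval
  by_cases h : 2 * k = d ∧ 1 ≤ k
  · simp only [if_pos h]
    have hd0 : (d : ℝ) ≠ 0 := by
      have : 0 < d := by omega
      exact_mod_cast this.ne'
    have h1 : ((k : ℝ) / d) = 2⁻¹ := by
      rw [div_eq_iff hd0]
      have : (d : ℝ) = 2 * k := by exact_mod_cast h.1.symm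
      rw [this]; ring
    rw [h1]
    rw [show (2⁻¹ * (t + 1) : ℝ) = 2⁻¹ * t + 2⁻¹ by ring]
    have B : ((2⁻¹ * t + 2⁻¹ + 2⁻¹ : ℝ) : Circle1) = ↑(2⁻¹ * t : ℝ) :=
      coe_eq_coe.2 ⟨1, by push_cast; ring⟩
    rw [B, pairNC_comm]
  · simp only [if_neg h]
    rw [show (1 * (t + 1) : ℝ) = 1 * t + 1 by ring]
    have C1 : ((1 * t + 1 : ℝ) : Circle1) = ↑(1 * t : ℝ) := coe_eq_coe.2 ⟨1, by push_cast; ring⟩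
    have C2 : ((1 * t + 1 + (k : ℝ) / d : ℝ) : Circle1) = ↑(1 * t + (k : ℝ) / d : ℝ) :=
      coe_eq_coe.2 ⟨1, by push_cast; ring⟩
    rw [C1, C2]

lemma gcont (d k : ℕ) : Continuous (gfun d k) := by
  apply continuous_pairNC.comp (Continuous.prodMk ?_ ?_)
  · exact (QuotientAddGroup.continuous_mk).comp (continuous_const.mul continuous_id)
  · exact (QuotientAddGroup.continuous_mk).comp ((continuous_const.mul continuous_id).add continuous_const)

noncomputable def Ffun (d : ℕ) : Fin (d / 2) × Circle1 → NonemptyCompacts Circle1 :=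
  fun p => (gper d (p.1.1 + 1)).lift p.2

lemma liftcont (d k : ℕ) : Continuous ((gper d k).lift) := by
  have hq : Topology.IsQuotientMap ((↑) : ℝ → Circle1) :=
    (QuotientAddGroup.isOpenQuotientMap_mk).isQuotientMap
  rw [hq.continuous_iff]
  have : ((gper d k).lift ∘ ((↑) : ℝ → Circle1)) = gfun d k := by
    funext t; exact (gper d k).lift_coe t
  rw [this]
  exact gcont d k

lemma Fcont (d : ℕ) : Continuous (Ffun d) := by
  rw [continuous_iff_continuousAt]
  rintro ⟨i, x⟩
  have h1 : ContinuousAt (fun p : Fin (d / 2) × Circle1 => (gper d (i.1 + 1)).lift p.2) (i, x) :=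
    ((liftcont d (i.1 + 1)).comp continuous_snd).continuousAt
  refine h1.congr ?_
  have hmem : {p : Fin (d / 2) × Circle1 | p.1 = i} ∈ nhds (i, x) := by
    have : IsOpen {p : Fin (d / 2) × Circle1 | p.1 = i} :=
      (isOpen_discrete {i}).preimage continuous_fst
    exact this.mem_nhds rfl
  filter_upwards [hmem] with p hp
  simp only [Ffun, hp]


lemma int_bound_zero {n : ℤ} (h1 : (-1 : ℝ) < n) (h2 : (n : ℝ) < 1) : n = 0 := by
  have b1 : (-1 : ℤ) < n := by exact_mod_cast h1
  have b2 : n < 1 := by exact_mod_cast h2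
  omega

lemma base_eq {d k : ℕ} {t s : ℝ}
    (h : (↑(cval d k * t) : Circle1) = ↑(cval d k * s)) : (↑t : Circle1) = ↑s := by
  obtain ⟨n, hn⟩ := coe_eq_coe.1 h
  unfold cval at hn
  by_cases hc : 2 * k = d ∧ 1 ≤ k
  · rw [if_pos hc] at hn
    refine coe_eq_coe.2 ⟨2 * n, ?_⟩
    push_cast
    linarith
  · rw [if_neg hc] at hn
    refine coe_eq_coe.2 ⟨n, ?_⟩
    linarith

lemma F_inj (d : ℕ) (hd : 2 ≤ d) : Function.Injective (Ffun d) := by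
  have hd0 : (d : ℝ) ≠ 0 := Nat.cast_ne_zero.2 (by omega)
  have hdpos : (0 : ℝ) < d := by positivity
  rintro ⟨i, x⟩ ⟨j, y⟩ h
  obtain ⟨t, rfl⟩ := QuotientAddGroup.mk_surjective x
  obtain ⟨s, rfl⟩ := QuotientAddGroup.mk_surjective y
  simp only [Ffun, Function.Periodic.lift_coe] at h
  have hset := congrArg (fun K : NonemptyCompacts Circle1 => (K : Set Circle1)) h
  simp only [gfun, pairNC_coe] at hset
  rw [Set.pair_eq_pair_iff] at hset
  have hki2 : 2 * (i.1 + 1) ≤ d := by have := i.2; omega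
  have hkj2 : 2 * (j.1 + 1) ≤ d := by have := j.2; omega
  have hri : (0 : ℝ) < ((i.1 : ℝ) + 1) / d := by positivity
  have hrj : (0 : ℝ) < ((j.1 : ℝ) + 1) / d := by positivity
  have hki2' : 2 * ((i.1 : ℝ) + 1) ≤ d := by exact_mod_cast hki2
  have hkj2' : 2 * ((j.1 : ℝ) + 1) ≤ d := by exact_mod_cast hkj2
  have hri2 : ((i.1 : ℝ) + 1) / d ≤ 2⁻¹ := by
    rw [div_le_iff₀ hdpos]; linarith
  have hrj2 : ((j.1 : ℝ) + 1) / d ≤ 2⁻¹ := by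
    rw [div_le_iff₀ hdpos]; linarith
  rcases hset with ⟨h1, h2⟩ | ⟨h1, h2⟩
  · obtain ⟨n, hn⟩ := coe_eq_coe.1 h1
    obtain ⟨n', hn'⟩ := coe_eq_coe.1 h2
    push_cast at hn hn'
    have hdiff : ((i.1 : ℝ) + 1) / d - ((j.1 : ℝ) + 1) / d = ((n' - n : ℤ) : ℝ) := by
      push_cast
      linarith
    have hz : (n' - n : ℤ) = 0 := by
      exact int_bound_zero (by rw [← hdiff]; linarith) (by rw [← hdiff]; linarith)
    rw [hz] at hdiff
    have hij : i = j := by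
      have hreq : ((i.1 : ℝ) + 1) = ((j.1 : ℝ) + 1) :=
        (div_left_inj' hd0).1 (by push_cast at hdiff; exact sub_eq_zero.1 hdiff)
      have : (i.1 : ℝ) = j.1 := by linarith
      exact Fin.ext (by exact_mod_cast this)
    subst hij
    have hxy : (↑t : Circle1) = ↑s := base_eq h1
    simp only [Prod.mk.injEq]
    exact ⟨trivial, hxy⟩
  · obtain ⟨n, hn⟩ := coe_eq_coe.1 h1
    obtain ⟨n', hn'⟩ := coe_eq_coe.1 h2
    push_cast at hn hn'
    have hsum : ((i.1 : ℝ) + 1) / d + ((j.1 : ℝ) + 1) / d = ((n' - n : ℤ) : ℝ) := by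
      push_cast
      linarith
    have hone : (n' - n : ℤ) = 1 := by
      have b1 : (0 : ℝ) < ((n' - n : ℤ) : ℝ) := by rw [← hsum]; linarith
      have b2 : ((n' - n : ℤ) : ℝ) ≤ 1 := by rw [← hsum]; linarith
      have c1 : (0 : ℤ) < n' - n := by exact_mod_cast b1
      have c2 : (n' - n : ℤ) ≤ 1 := by exact_mod_cast b2
      omega
    rw [hone] at hsum
    push_cast at hsum
    have hsum' : ((i.1 : ℝ) + 1) + ((j.1 : ℝ) + 1) = d := by
      field_simp at hsum
      linarith
    have hsumn : (i.1 + 1) + (j.1 + 1) = d := by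
      exact_mod_cast hsum'
    have hkeq : i.1 + 1 = j.1 + 1 ∧ 2 * (i.1 + 1) = d := by omega
    have hij : i = j := Fin.ext (by omega)
    subst hij
    have hc : cval d (i.1 + 1) = 2⁻¹ := by unfold cval; rw [if_pos ⟨hkeq.2, by omega⟩]
    have hr : ((i.1 : ℝ) + 1) / d = 2⁻¹ := by
      rw [div_eq_iff hd0]
      have h2d : (d : ℝ) = 2 * ((i.1 : ℝ) + 1) := by exact_mod_cast hkeq.2.symm
      rw [h2d]; ring
    rw [hc] at hn
    have hxy : (↑t : Circle1) = ↑s := by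
      refine coe_eq_coe.2 ⟨2 * n + 1, ?_⟩
      push_cast
      have := hn
      rw [hr] at this
      linarith
    simp only [Prod.mk.injEq]
    exact ⟨trivial, hxy⟩


lemma coe_add_int (u : ℝ) (n : ℤ) : ((u + n : ℝ) : Circle1) = ↑u :=
  coe_eq_coe.2 ⟨n, by ring⟩

lemma mem_range_of {d : ℕ} (hd : 2 ≤ d) (t : ℝ) (k : ℕ) (hk1 : 1 ≤ k) (hk2 : 2 * k ≤ d) :
    pairNC ↑t ↑(t + k / d) ∈ Set.range (Ffun d) := by
  have hkm : k - 1 < d / 2 := by omega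
  have hk' : k - 1 + 1 = k := by omega
  by_cases h : 2 * k = d
  · refine ⟨(⟨k - 1, hkm⟩, ↑(2 * t)), ?_⟩
    simp only [Ffun, Function.Periodic.lift_coe]
    rw [hk']
    unfold gfun cval
    rw [if_pos ⟨h, hk1⟩]
    rw [show (2⁻¹ * (2 * t) : ℝ) = t by ring]
  · refine ⟨(⟨k - 1, hkm⟩, ↑t), ?_⟩
    simp only [Ffun, Function.Periodic.lift_coe]
    rw [hk']
    unfold gfun cval
    rw [if_neg (fun hc => h hc.1)]
    rw [show (1 * t : ℝ) = t by ring]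

lemma range_F {d : ℕ} (hd : 2 ≤ d) : Set.range (Ffun d) = Sset d := by
  have hd0 : (d : ℝ) ≠ 0 := Nat.cast_ne_zero.2 (by omega)
  have hdpos : (0 : ℝ) < d := by positivity
  apply Set.Subset.antisymm
  · rintro _ ⟨⟨i, x⟩, rfl⟩
    obtain ⟨t, rfl⟩ := QuotientAddGroup.mk_surjective x
    simp only [Ffun, Function.Periodic.lift_coe, gfun]
    set k : ℕ := i.1 + 1 with hk
    have hk1 : 1 ≤ k := by omega
    have hk2 : 2 * k ≤ d := by have := i.2; omega
    have hkd : k < d := by omega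
    refine ⟨↑(cval d k * t), ↑(cval d k * t + (k : ℝ) / d), ?_, ?_, rfl⟩
    · intro hcontra
      obtain ⟨n, hn⟩ := coe_eq_coe.1 hcontra
      have he : -((k : ℝ) / d) = n := by linarith [hn]
      have hb1 : (0 : ℝ) < (k : ℝ) / d := by positivity
      have hb2 : (k : ℝ) / d < 1 := by
        rw [div_lt_one hdpos]
        exact_mod_cast hkd
      have c1 : (-1 : ℝ) < n := by rw [← he]; linarith
      have c2 : (n : ℝ) < 1 := by rw [← he]; linarith
      have := int_bound_zero c1 c2
      rw [this] at he
      simp at he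
      linarith
    · rw [← AddCircle.coe_nsmul, ← AddCircle.coe_nsmul]
      refine coe_eq_coe.2 ⟨-k, ?_⟩
      simp only [nsmul_eq_mul]
      push_cast
      field_simp
      ring
  · rintro K ⟨α, α', hne, hsm, hK⟩
    obtain ⟨t, rfl⟩ := QuotientAddGroup.mk_surjective α
    obtain ⟨s, rfl⟩ := QuotientAddGroup.mk_surjective α'
    have hKeq : K = pairNC ↑t ↑s := NonemptyCompacts.ext (by rw [hK]; rfl)
    rw [← AddCircle.coe_nsmul, ← AddCircle.coe_nsmul] at hsm
    obtain ⟨n, hn⟩ := coe_eq_coe.1 hsm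
    simp only [nsmul_eq_mul] at hn
    -- hn : d * t - d * s = n
    set j : ℤ := n % d with hj
    have hdz : (d : ℤ) ≠ 0 := by exact_mod_cast Nat.cast_ne_zero.2 (by omega : d ≠ 0)
    have hj0 : 0 ≤ j := Int.emod_nonneg n hdz
    have hjd : j < d := by
      have := Int.emod_lt_of_pos n (by exact_mod_cast (by omega : 0 < d) : (0:ℤ) < d)
      exact this
    -- s = t - n/d ; and ↑s = ↑(t - j/d)
    have hs : s = t - (n : ℝ) / d := by field_simp at hn ⊢; linarith
    have hsj : ((s : ℝ) : Circle1) = ↑(t - (j : ℝ) / d) := by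
      refine coe_eq_coe.2 ⟨-(n / d : ℤ), ?_⟩
      rw [hs]
      have : (n : ℝ) = ((d : ℤ) * (n / d) + n % d : ℤ) := by
        rw [Int.mul_ediv_add_emod]
      rw [this]
      push_cast
      field_simp
      ring
    have hjne : j ≠ 0 := by
      intro h0
      apply hne
      rw [hsj, h0]
      push_cast
      rw [show (t - 0 / (d:ℝ) : ℝ) = t by ring]
    set k0 : ℕ := j.toNat with hk0
    have hk0j : (k0 : ℝ) = (j : ℝ) := by
      rw [hk0]
      exact_mod_cast congrArg Int.cast (Int.toNat_of_nonneg hj0)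
    have hk01 : 1 ≤ k0 := by omega
    have hk0d : k0 < d := by omega
    -- K = pairNC ↑(t - k0/d) ↑((t - k0/d) + k0/d)
    have hKeq2 : K = pairNC ↑(t - (k0 : ℝ) / d) ↑((t - (k0 : ℝ) / d) + (k0 : ℝ) / d) := by
      rw [hKeq, show ((t - (k0 : ℝ) / d) + (k0 : ℝ) / d : ℝ) = t by ring, pairNC_comm]
      congr 1
      rw [hsj, hk0j]
    rw [hKeq2]
    by_cases hcase : 2 * k0 ≤ d
    · exact mem_range_of hd _ k0 hk01 hcase
    · set k1 : ℕ := d - k0 with hk1d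
      have hk11 : 1 ≤ k1 := by omega
      have hk12 : 2 * k1 ≤ d := by omega
      have hsplit : ((t - (k0 : ℝ) / d) + (k0 : ℝ) / d + (k1 : ℝ) / d : ℝ)
          = (t - (k0 : ℝ) / d) + 1 := by
        have : (k0 : ℝ) + (k1 : ℝ) = d := by
          push_cast [hk1d]
          have : (k0 : ℝ) ≤ d := by exact_mod_cast hk0d.le
          push_cast [Nat.cast_sub hk0d.le]
          ring
        field_simp
        linarith
      have hpc : pairNC ↑(t - (k0 : ℝ) / d) ↑((t - (k0 : ℝ) / d) + (k0 : ℝ) / d)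
          = pairNC ↑((t - (k0 : ℝ) / d) + (k0 : ℝ) / d)
              ↑(((t - (k0 : ℝ) / d) + (k0 : ℝ) / d) + (k1 : ℝ) / d) := by
        rw [show (((t - (k0 : ℝ) / d) + (k0 : ℝ) / d) + (k1 : ℝ) / d : ℝ)
            = ((t - (k0 : ℝ) / d) + 1 : ℝ) from hsplit]
        rw [show (((t - (k0 : ℝ) / d) + 1 : ℝ) : Circle1) = ↑(t - (k0 : ℝ) / d) from
          coe_eq_coe.2 ⟨1, by push_cast; ring⟩]
        exact pairNC_comm _ _
      rw [hpc]
      exact mem_range_of hd _ k1 hk11 hk12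

end SsetAux

/-- `S`, with the Hausdorff metric, is compact and has exactly `⌊d/2⌋`
connected components, each homeomorphic to `ℝ/ℤ`; i.e. `S` is homeomorphic to the disjoint
union of `⌊d/2⌋` circles. -/
theorem Sset_compact_and_components (d : ℕ) (hd : 2 ≤ d) :
    IsCompact (Sset d) ∧ Nonempty (Sset d ≃ₜ Fin (d / 2) × Circle1) := by
  have hrange : Set.range (SsetAux.Ffun d) = Sset d := SsetAux.range_F hd
  constructor
  · rw [← hrange]
    exact isCompact_range (SsetAux.Fcont d)
  · have hmem : ∀ p, SsetAux.Ffun d p ∈ Sset d := fun p => hrange ▸ Set.mem_range_self p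
    let f' : Fin (d / 2) × Circle1 → (Sset d) := fun p => ⟨SsetAux.Ffun d p, hmem p⟩
    have hbij : Function.Bijective f' := by
      constructor
      · intro a b hab
        exact SsetAux.F_inj d hd (congrArg Subtype.val hab)
      · rintro ⟨K, hK⟩
        rw [← hrange] at hK
        obtain ⟨p, hp⟩ := hK
        exact ⟨p, Subtype.ext hp⟩
    let e := Equiv.ofBijective f' hbij
    have hc : Continuous e := Continuous.subtype_mk (SsetAux.Fcont d) _
    exact ⟨(hc.homeoOfEquivCompactToT2).symm⟩
end

section
/- Let M_d: ℝ/ℤ → ℝ/ℤ be multiplication by d, let α, α' ∈ ℝ/ℤ with α' = α + k/d for some 1 ≤ k < d/2, and let I ⊂ ℝ/ℤ be an interval of length < 1/d. Let I_0, I_1 be the two connected components of (ℝ/ℤ) \ {α, α'}, of lengths ℓ_0/d and ℓ_1/d with ℓ_0 + ℓ_1 = d. Then for each ε ∈ {0,1}, M_d^{−1}(I) ∩ I_ε consists of at most ℓ_ε + 1 intervals, and of exactly ℓ_ε intervals when dα ∉ I. -/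
/-- An (open) arc of the circle: the image of a bounded open interval of length at most `1`. -/
def IsArc (A : Set Circle1) : Prop :=
  ∃ a b : ℝ, a < b ∧ b - a ≤ 1 ∧ A = (fun x : ℝ => (x : Circle1)) '' Set.Ioo a b

open Set Function

/-! On the lift to `ℝ`, the preimage `M_d⁻¹(I)` of `I = (s, t)` is the union of the translates
`((s + j) / d, (t + j) / d)`, `j ∈ ℤ`, spaced `1 / d` apart. Both components `I_0`, `I_1` have the
form `(a / d, (a + m) / d)`, with `(a, m) = (dα, k)` and `(dα + k, d - k)`. Such an arc meets only
the translates with `j₀ ≤ j ≤ j₀ + m`, where `j₀` is the least index with `a < t + j₀`, and each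
intersection is an arc. If `a ≡ dα` is not in `I + ℤ`, then `a` lies in a gap
`t + j₀ - 1 ≤ a ≤ s + j₀` between consecutive translates, so the `m` translates with
`j₀ ≤ j < j₀ + m` lie inside the arc and all the others miss it. -/

lemma coe_eq_coe_iff_exists_int {x y : ℝ} : (x : Circle1) = y ↔ ∃ j : ℤ, x + j = y := by
  rw [eq_comm, ← sub_eq_zero, ← AddCircle.coe_sub, AddCircle.coe_eq_zero_iff]
  exact exists_congr fun j => by rw [zsmul_one]; constructor <;> intro h <;> linarith

lemma coe_mem_image_coe_iff {S : Set ℝ} {x : ℝ} :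
    (x : Circle1) ∈ ((↑) : ℝ → Circle1) '' S ↔ ∃ j : ℤ, x - j ∈ S := by
  simp only [mem_image, coe_eq_coe_iff_exists_int]
  grind

lemma exists_gap_of_coe_notMem_image_Ioo {s t a : ℝ} (ha : (a : Circle1) ∉ (↑) '' Ioo s t) :
    ∃ j₀ : ℤ, t + (j₀ - 1) ≤ a ∧ a ≤ s + j₀ := by
  refine ⟨⌈a - s⌉, ?_, by linarith [Int.le_ceil (a - s)]⟩
  have hgap : a - (⌈a - s⌉ - 1 : ℤ) ∉ Ioo s t := fun h => ha (coe_mem_image_coe_iff.2 ⟨_, h⟩)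
  have hs : s < a - (⌈a - s⌉ - 1 : ℤ) := by push_cast; linarith [Int.ceil_lt_add_one (a - s)]
  push_cast at hgap hs
  linarith [not_lt.1 fun ht => hgap ⟨hs, ht⟩]

lemma isArc_image_coe_Ioo_inter_Ioo {a b u v : ℝ} (hne : (Ioo a b ∩ Ioo u v).Nonempty)
    (h : v - u ≤ 1) : IsArc ((↑) '' (Ioo a b ∩ Ioo u v)) := by
  rw [Ioo_inter_Ioo] at hne ⊢
  exact ⟨_, _, nonempty_Ioo.1 hne, by linarith [le_max_right a u, min_le_right b v], rfl⟩

lemma disjoint_image_coe_of_subset_Ico {S T : Set ℝ} {p : ℝ} (hS : S ⊆ Ico p (p + 1))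
    (hT : T ⊆ Ico p (p + 1)) (h : Disjoint S T) :
    Disjoint (((↑) : ℝ → Circle1) '' S) ((↑) '' T) := by
  have hinj : InjOn ((↑) : ℝ → Circle1) (Ico p (p + 1)) := fun x hx y hy hxy =>
    (AddCircle.coe_eq_coe_iff_of_mem_Ico hx hy).1 hxy
  rw [disjoint_iff_inter_eq_empty, ← hinj.image_inter hS hT, h.inter_eq, image_empty]

lemma iUnion_int_eq_iUnion_fin {α : Type*} {f : ℤ → Set α} {j₀ : ℤ} {n : ℕ}
    (hf : ∀ j, (f j).Nonempty → j ∈ Ico j₀ (j₀ + n)) : ⋃ j, f j = ⋃ i : Fin n, f (j₀ + i) := by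
  refine Subset.antisymm (iUnion_subset fun j x hx => ?_) (iUnion_subset fun i => subset_iUnion f _)
  obtain ⟨h₀, h₁⟩ := hf j ⟨x, hx⟩
  refine mem_iUnion.2 ⟨⟨(j - j₀).toNat, by omega⟩, ?_⟩
  rwa [show j₀ + ((j - j₀).toNat : ℤ) = j by omega]

lemma exists_fin_family_nonempty_iUnion_eq {α ι : Type*} [Fintype ι] (P : ι → Set α) :
    ∃ n ≤ Fintype.card ι, ∃ A : Fin n → Set α,
      (∀ i, (A i).Nonempty ∧ A i ∈ range P) ∧ ⋃ i, A i = ⋃ j, P j := by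
  classical
  let e := Fintype.equivFin {j // (P j).Nonempty}
  refine ⟨_, Fintype.card_subtype_le _, fun i => P (e.symm i),
    fun i => ⟨(e.symm i).2, mem_range_self _⟩, ?_⟩
  rw [e.symm.surjective.iUnion_comp fun j => P j]
  refine Subset.antisymm (iUnion_subset fun j => subset_iUnion P j) (iUnion_subset fun j x hx => ?_)
  exact mem_iUnion.2 ⟨⟨j, x, hx⟩, hx⟩

section PreimageComponents

variable {d : ℕ} {s t : ℝ}

lemma coe_preimage_nsmul_preimage_image_coe_Ioo (hd : 0 < d) :
    ((↑) : ℝ → Circle1) ⁻¹' ((d • ·) ⁻¹' ((↑) '' Ioo s t)) =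
      ⋃ j : ℤ, Ioo ((s + j) / d) ((t + j) / d) := by
  ext x
  simp only [mem_preimage, ← AddCircle.coe_nsmul, coe_mem_image_coe_iff, mem_iUnion, nsmul_eq_mul,
    sub_mem_Ioo_iff_left, ← preimage_const_mul_Ioo₀ _ _ (Nat.cast_pos.2 hd : (0 : ℝ) < d)]

lemma nsmul_preimage_inter_image_coe (hd : 0 < d) (J : Set ℝ) :
    (d • ·) ⁻¹' (((↑) : ℝ → Circle1) '' Ioo s t) ∩ (↑) '' J =
      ⋃ j : ℤ, (↑) '' (J ∩ Ioo ((s + j) / d) ((t + j) / d)) := by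
  rw [inter_comm, ← image_inter_preimage, coe_preimage_nsmul_preimage_image_coe_Ioo hd,
    inter_iUnion, image_iUnion]

lemma component_length_le (hd : 0 < d) (hlen : t - s ≤ 1) (c : ℝ) :
    (t + c) / d - (s + c) / d ≤ 1 := by
  have hd' : (1 : ℝ) ≤ d := by exact_mod_cast hd
  rw [← sub_div, add_sub_add_right_eq_sub, div_le_one (by positivity)]
  linarith

lemma pairwise_disjoint_components (hd : 0 < d) (hlen : t - s ≤ 1) :
    Pairwise (Disjoint on fun j : ℤ => Ioo ((s + j) / d) ((t + j) / d)) := by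
  intro i j hij
  simp only [onFun, ← preimage_const_mul_Ioo₀ _ _ (Nat.cast_pos.2 hd : (0 : ℝ) < d)]
  refine ((pairwise_disjoint_Ioo_add_intCast s hij).mono ?_ ?_).preimage _ <;>
    exact Ioo_subset_Ioo_right (by linarith)

lemma index_mem_Ico_of_inter_nonempty (hd : 0 < d) {a b : ℝ} {j₀ j : ℤ} {n : ℕ}
    (h₀ : t + (j₀ - 1) ≤ a) (h₁ : b ≤ s + (j₀ + n))
    (h : (Ioo (a / d) (b / d) ∩ Ioo ((s + j) / d) ((t + j) / d)).Nonempty) :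
    j ∈ Ico j₀ (j₀ + n) := by
  have hd' : (0 : ℝ) < d := by exact_mod_cast hd
  obtain ⟨x, ⟨hax, hxb⟩, hsx, hxt⟩ := h
  have hat : a < t + j := (div_lt_div_iff_of_pos_right hd').1 (hax.trans hxt)
  have hsb : s + j < b := (div_lt_div_iff_of_pos_right hd').1 (hsx.trans hxb)
  have hlo : j₀ - 1 < j := by exact_mod_cast (show (j₀ : ℝ) - 1 < j by linarith)
  have hhi : j < j₀ + n := by exact_mod_cast (show (j : ℝ) < j₀ + n by linarith)
  exact ⟨by omega, hhi⟩

theorem nsmul_preimage_inter_card_arcs_le (hd : 0 < d) (hlen : t - s ≤ 1) (a : ℝ) (m : ℕ) :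
    ∃ n ≤ m + 1, ∃ A : Fin n → Set Circle1, (∀ i, IsArc (A i)) ∧
      (d • ·) ⁻¹' (((↑) : ℝ → Circle1) '' Ioo s t) ∩ (↑) '' Ioo (a / d) ((a + m) / d) =
        ⋃ i, A i := by
  set j₀ := ⌊a - t⌋ + 1
  have h₀ : t + (j₀ - 1) ≤ a := by push_cast [j₀]; linarith [Int.floor_le (a - t)]
  have h₁ : a + m ≤ s + (j₀ + (m + 1 : ℕ)) := by
    push_cast [j₀]; linarith [Int.lt_floor_add_one (a - t)]
  obtain ⟨n, hn, A, hA, hAU⟩ := exists_fin_family_nonempty_iUnion_eq fun i : Fin (m + 1) =>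
    ((↑) : ℝ → Circle1) '' (Ioo (a / d) ((a + m) / d) ∩
      Ioo ((s + (j₀ + i : ℤ)) / d) ((t + (j₀ + i : ℤ)) / d))
  refine ⟨n, by simpa using hn, A, fun i => ?_, ?_⟩
  · obtain ⟨hne, j, hj⟩ := hA i
    rw [← hj] at hne ⊢
    exact isArc_image_coe_Ioo_inter_Ioo (image_nonempty.1 hne) (component_length_le hd hlen _)
  · rw [nsmul_preimage_inter_image_coe hd, hAU,
      iUnion_int_eq_iUnion_fin fun j hj => index_mem_Ico_of_inter_nonempty hd h₀ h₁ hj.of_image]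

theorem nsmul_preimage_inter_card_arcs_eq (hd : 0 < d) {m : ℕ} (hmd : m ≤ d) (hst : s < t)
    {a : ℝ} (ha : (a : Circle1) ∉ (↑) '' Ioo s t) :
    ∃ A : Fin m → Set Circle1, (∀ i, IsArc (A i) ∧ (A i).Nonempty) ∧
      (∀ i j, i ≠ j → Disjoint (A i) (A j)) ∧
      (d • ·) ⁻¹' (((↑) : ℝ → Circle1) '' Ioo s t) ∩ (↑) '' Ioo (a / d) ((a + m) / d) =
        ⋃ i, A i := by
  have hd' : (0 : ℝ) < d := by exact_mod_cast hd
  obtain ⟨j₀, h₀, h₁⟩ := exists_gap_of_coe_notMem_image_Ioo ha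
  have hlen : t - s ≤ 1 := by linarith
  have hlt : ∀ c : ℝ, (s + c) / d < (t + c) / d := fun c =>
    (div_lt_div_iff_of_pos_right hd').2 (by linarith)
  have hsub : ∀ i : Fin m, Ioo ((s + (j₀ + i : ℤ)) / d) ((t + (j₀ + i : ℤ)) / d) ⊆
      Ioo (a / d) ((a + m) / d) := by
    intro i
    have hi₀ : (0 : ℝ) ≤ i := (i : ℕ).cast_nonneg
    have hi : (i : ℝ) + 1 ≤ m := by exact_mod_cast i.isLt
    refine Ioo_subset_Ioo (div_le_div_of_nonneg_right ?_ hd'.le)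
      (div_le_div_of_nonneg_right ?_ hd'.le) <;> push_cast <;> linarith
  have hIco : Ioo (a / d) ((a + m) / d) ⊆ Ico (a / d) (a / d + 1) := by
    refine Ioo_subset_Ico_self.trans (Ico_subset_Ico_right ?_)
    rw [add_div, add_le_add_iff_left, div_le_one hd']
    exact_mod_cast hmd
  refine ⟨fun i => (↑) '' Ioo ((s + (j₀ + i : ℤ)) / d) ((t + (j₀ + i : ℤ)) / d),
    fun i => ⟨⟨_, _, hlt _, component_length_le hd hlen _, rfl⟩, (nonempty_Ioo.2 (hlt _)).image _⟩,
    fun i i' hii' => disjoint_image_coe_of_subset_Ico ((hsub i).trans hIco) ((hsub i').trans hIco)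
      (pairwise_disjoint_components hd hlen (by simpa [Fin.val_inj] using hii')), ?_⟩
  rw [nsmul_preimage_inter_image_coe hd, iUnion_int_eq_iUnion_fin fun j hj =>
    index_mem_Ico_of_inter_nonempty hd h₀ (by linarith) hj.of_image]
  exact iUnion_congr fun i => by rw [inter_eq_right.2 (hsub i)]

end PreimageComponents

theorem preimage_arcs_count_general (d k : ℕ) (hk2 : 2 * k < d)
    (α s t : ℝ) (hst : s < t) (hlen : t - s < 1 / d) :
    (∃ n : ℕ, n ≤ k + 1 ∧ ∃ A : Fin n → Set Circle1, (∀ i, IsArc (A i)) ∧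
      ((fun x : Circle1 => d • x) ⁻¹' ((fun x : ℝ => (x : Circle1)) '' Set.Ioo s t)) ∩
          ((fun x : ℝ => (x : Circle1)) '' Set.Ioo α (α + k / d)) = ⋃ i, A i) ∧
    (∃ n : ℕ, n ≤ (d - k) + 1 ∧ ∃ A : Fin n → Set Circle1, (∀ i, IsArc (A i)) ∧
      ((fun x : Circle1 => d • x) ⁻¹' ((fun x : ℝ => (x : Circle1)) '' Set.Ioo s t)) ∩
          ((fun x : ℝ => (x : Circle1)) '' Set.Ioo (α + k / d) (α + 1)) = ⋃ i, A i) ∧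
    (d • ((α : ℝ) : Circle1) ∉ (fun x : ℝ => (x : Circle1)) '' Set.Ioo s t →
      (∃ A : Fin k → Set Circle1, (∀ i, IsArc (A i) ∧ (A i).Nonempty) ∧
        (∀ i j, i ≠ j → Disjoint (A i) (A j)) ∧
        ((fun x : Circle1 => d • x) ⁻¹' ((fun x : ℝ => (x : Circle1)) '' Set.Ioo s t)) ∩
            ((fun x : ℝ => (x : Circle1)) '' Set.Ioo α (α + k / d)) = ⋃ i, A i) ∧
      (∃ A : Fin (d - k) → Set Circle1, (∀ i, IsArc (A i) ∧ (A i).Nonempty) ∧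
        (∀ i j, i ≠ j → Disjoint (A i) (A j)) ∧
        ((fun x : Circle1 => d • x) ⁻¹' ((fun x : ℝ => (x : Circle1)) '' Set.Ioo s t)) ∩
            ((fun x : ℝ => (x : Circle1)) '' Set.Ioo (α + k / d) (α + 1)) = ⋃ i, A i)) := by
  have hd : 0 < d := by omega
  have hunit : t - s ≤ 1 := hlen.le.trans (div_le_one_of_le₀ (by exact_mod_cast hd) (by positivity))
  have hI₀ : Ioo α (α + k / d) = Ioo (d * α / d) ((d * α + k) / d) := by
    congr 1 <;> field_simp
  have hI₁ : Ioo (α + k / d) (α + 1) = Ioo ((d * α + k) / d) ((d * α + k + (d - k : ℕ)) / d) := by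
    rw [Nat.cast_sub (by omega)]
    congr 1 <;> field_simp
    ring
  have hdα : d • (α : Circle1) = ((d * α : ℝ) : Circle1) := by
    rw [← AddCircle.coe_nsmul, nsmul_eq_mul]
  have hdα' : ((d * α + k : ℝ) : Circle1) = ((d * α : ℝ) : Circle1) :=
    coe_eq_coe_iff_exists_int.2 ⟨-k, by push_cast; ring⟩
  rw [hI₀, hI₁, hdα]
  exact ⟨nsmul_preimage_inter_card_arcs_le hd hunit _ k,
    nsmul_preimage_inter_card_arcs_le hd hunit _ (d - k),
    fun ha => ⟨nsmul_preimage_inter_card_arcs_eq hd (by omega) hst ha,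
      nsmul_preimage_inter_card_arcs_eq hd (by omega) hst (hdα' ▸ ha)⟩⟩

/-- Let `M_d` be multiplication by `d` on `ℝ/ℤ`, let `α' = α + k/d` with
`1 ≤ k < d/2`, and let `I` be an interval of length `< 1/d`.  Let `I_0, I_1` be the two
components of `(ℝ/ℤ) ∖ {α, α'}`, of lengths `k/d` and `(d−k)/d`.  Then `M_d^{−1}(I) ∩ I_0`
consists of at most `k + 1` arcs — exactly `k` pairwise disjoint nonempty arcs when `dα ∉ I` —
and `M_d^{−1}(I) ∩ I_1` consists of at most `(d−k) + 1` arcs — exactly `d−k` pairwise disjoint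
nonempty arcs when `dα ∉ I`. -/
theorem preimage_arcs_count (d k : ℕ) (hd : 3 ≤ d) (hk : 1 ≤ k) (hk2 : 2 * k < d)
    (α s t : ℝ) (hst : s < t) (hlen : t - s < 1 / d) :
    (∃ n : ℕ, n ≤ k + 1 ∧ ∃ A : Fin n → Set Circle1, (∀ i, IsArc (A i)) ∧
      ((fun x : Circle1 => d • x) ⁻¹' ((fun x : ℝ => (x : Circle1)) '' Set.Ioo s t)) ∩
          ((fun x : ℝ => (x : Circle1)) '' Set.Ioo α (α + k / d)) = ⋃ i, A i) ∧
    (∃ n : ℕ, n ≤ (d - k) + 1 ∧ ∃ A : Fin n → Set Circle1, (∀ i, IsArc (A i)) ∧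
      ((fun x : Circle1 => d • x) ⁻¹' ((fun x : ℝ => (x : Circle1)) '' Set.Ioo s t)) ∩
          ((fun x : ℝ => (x : Circle1)) '' Set.Ioo (α + k / d) (α + 1)) = ⋃ i, A i) ∧
    (d • ((α : ℝ) : Circle1) ∉ (fun x : ℝ => (x : Circle1)) '' Set.Ioo s t →
      (∃ A : Fin k → Set Circle1, (∀ i, IsArc (A i) ∧ (A i).Nonempty) ∧
        (∀ i j, i ≠ j → Disjoint (A i) (A j)) ∧
        ((fun x : Circle1 => d • x) ⁻¹' ((fun x : ℝ => (x : Circle1)) '' Set.Ioo s t)) ∩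
            ((fun x : ℝ => (x : Circle1)) '' Set.Ioo α (α + k / d)) = ⋃ i, A i) ∧
      (∃ A : Fin (d - k) → Set Circle1, (∀ i, IsArc (A i) ∧ (A i).Nonempty) ∧
        (∀ i j, i ≠ j → Disjoint (A i) (A j)) ∧
        ((fun x : Circle1 => d • x) ⁻¹' ((fun x : ℝ => (x : Circle1)) '' Set.Ioo s t)) ∩
            ((fun x : ℝ => (x : Circle1)) '' Set.Ioo (α + k / d) (α + 1)) = ⋃ i, A i)) :=
  preimage_arcs_count_general d k hk2 α s t hst hlen
end
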